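/- Fix a real number N > 1 and L > 0. For every ε > 0 there exist w̄ > 0 and δ̄ > 0 such that for all D ≥ 3L, all D' ∈ (0, D], every probability CD(0,N) density h on [0,D'], and every interval set E ⊆ [0, L] with 0 < m_h(E) ≤ w̄ and Res_h^D(E) ≤ δ̄, one has h(x) ≥ (N/D^N)·x^{N−1}·(1 − ε) for every x ∈ [0, b(E)]. -/

import Mathlib

open MeasureTheory
open scoped Classical

noncomputable section

/-- A `CD(0,N)` density on `[0, D']`: nonnegative on `[0, D']`, positive on `(0, D')`,
and `h^{1/(N-1)}` is concave on `[0, D']`. -/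
def IsCDDensity (N D' : ℝ) (h : ℝ → ℝ) : Prop :=
  (∀ x ∈ Set.Icc (0:ℝ) D', 0 ≤ h x) ∧
  (∀ x ∈ Set.Ioo (0:ℝ) D', 0 < h x) ∧
  ConcaveOn ℝ (Set.Icc (0:ℝ) D') (fun x => h x ^ (1 / (N - 1)))

/-- A probability `CD(0,N)` density on `[0, D']`. -/
def IsProbCDDensity (N D' : ℝ) (h : ℝ → ℝ) : Prop :=
  IsCDDensity N D' h ∧ (∫ x in Set.Icc (0:ℝ) D', h x) = 1

/-- A decomposition of an "interval set" `E ⊆ [0, D']`: up to a Lebesgue-null set, `E` is an at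
most countable union of pairwise separated open intervals (degenerate intervals `a i = b i`
are allowed, so that finite families are covered); the summability field expresses that the
perimeter of `E` with respect to the density `h` is a (finite) real number. -/
structure IntervalDecomp (D' : ℝ) (h : ℝ → ℝ) (E : Set ℝ) where
  a : ℕ → ℝ
  b : ℕ → ℝ
  nonneg : ∀ i, 0 ≤ a i
  le : ∀ i, a i ≤ b i
  le_top : ∀ i, b i ≤ D'
  sep : ∀ i j, i ≠ j → b i ≤ a j ∨ b j ≤ a i
  aeEq : E =ᵐ[volume] ⋃ i, Set.Ioo (a i) (b i)
  summablePerim : Summable fun i =>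
    (if a i < b i ∧ a i ≠ 0 then h (a i) else 0) +
    (if a i < b i ∧ b i ≠ D' then h (b i) else 0)

/-- The weighted perimeter `P_h(E) = Σ_{i : a_i ≠ 0} h(a_i) + Σ_{i : b_i ≠ D'} h(b_i)`
of an interval set, computed from a decomposition. -/
def IntervalDecomp.perim {D' : ℝ} {h : ℝ → ℝ} {E : Set ℝ}
    (d : IntervalDecomp D' h E) : ℝ :=
  ∑' i, ((if d.a i < d.b i ∧ d.a i ≠ 0 then h (d.a i) else 0) +
         (if d.a i < d.b i ∧ d.b i ≠ D' then h (d.b i) else 0))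

/-- The essential supremum `b(E)` of a set `E ⊆ ℝ` with respect to Lebesgue measure. -/
def essSupSet (E : Set ℝ) : ℝ :=
  sInf {t : ℝ | volume (E ∩ Set.Ioi t) = 0}

/-!
Write `g = h ^ (1 / (N - 1))`, a concave function on `[0, D']`. The rays from `(0, 0)` and from
`(D', 0)` lie below the graph of `g`, so the value of `h` at one point controls `h` on whole
intervals. Concavity also yields a Lévy–Gromov-type isoperimetric inequality: an interval of small
mass `v` has perimeter at least `(9/20) N v ^ (1 - 1/N) / D'`; summing over the intervals of `E`
(with the subadditivity of `t ↦ t ^ (1 - 1/N)`) bounds `P_h(E)` from below, and together with the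
small residual this forces `D' ≥ 9 D / 22`, so `b(E) ≤ L ≤ D / 3` stays away from `D'`.

Now take an interval of `E` reaching almost up to `b(E)`, with left endpoint `a`. Below `a` the
ray from `(D', 0)` gives `h ≤ 6 ^ (N - 1) h(a) ≤ 6 ^ (N - 1) P_h(E)`, which the residual makes
`O(m_h(E) ^ (1 - 1/N) / D)`; adding the mass of the interval itself, `[0, b(E)]` carries mass
less than `ε`. The density, having mass more than `1 - ε` on `[b(E), D']`, must exceed `1 - ε`
times the model density `N x ^ (N - 1) / D ^ N` (of mass at most `1` there) at some `y ≥ b(E)`,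
and the ray from `(0, 0)` through `(y, g y)` carries this bound down to all of `[0, b(E)]`.
-/

open MeasureTheory Set Filter Topology

lemma integral_le_of_le_linear_rpow {N S k p q : ℝ} {f : ℝ → ℝ} (hN : 1 < N) (hS : 0 < S)
    (hkp : k ≤ p) (hpq : p ≤ q) (hf : IntervalIntegrable f volume p q)
    (hle : ∀ x ∈ Ioo p q, f x ≤ (S * (x - k)) ^ (N - 1)) :
    ∫ x in p..q, f x ≤ (S * (q - k)) ^ N / (N * S) := by
  have hcont : Continuous fun x => S ^ (N - 1) * (x - k) ^ (N - 1) :=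
    continuous_const.mul ((continuous_id.sub continuous_const).rpow_const fun _ => by
      right; linarith)
  have hpow : ∫ x in p..q, S ^ (N - 1) * (x - k) ^ (N - 1) =
      S ^ (N - 1) * (((q - k) ^ N - (p - k) ^ N) / N) := by
    rw [intervalIntegral.integral_const_mul, intervalIntegral.integral_comp_sub_right
      (fun x => x ^ (N - 1)), integral_rpow (Or.inl (by linarith)), sub_add_cancel]
  calc ∫ x in p..q, f x ≤ ∫ x in p..q, S ^ (N - 1) * (x - k) ^ (N - 1) := by
        refine intervalIntegral.integral_mono_on_of_le_Ioo hpq hf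
          (hcont.intervalIntegrable _ _) fun x hx => ?_
        rw [← Real.mul_rpow hS.le (by linarith [hx.1])]
        exact hle x hx
    _ ≤ S ^ (N - 1) * ((q - k) ^ N / N) := by
        rw [hpow]
        gcongr
        exact sub_le_self _ (Real.rpow_nonneg (by linarith) N)
    _ = (S * (q - k)) ^ N / (N * S) := by
        rw [Real.mul_rpow hS.le (by linarith), Real.rpow_sub_one hS.ne']
        field_simp

lemma mul_rpow_le_tsum_of_hasSum {ι : Type*} {p c s : ℝ} {v q : ι → ℝ} (hp0 : 0 < p)
    (hp1 : p ≤ 1) (hc : 0 ≤ c) (hv : ∀ i, 0 ≤ v i) (hs : HasSum v s) (hq : Summable q)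
    (hvq : ∀ i, c * v i ^ p ≤ q i) : c * s ^ p ≤ ∑' i, q i := by
  have hfin : ∀ t : Finset ι, c * (∑ i ∈ t, v i) ^ p ≤ ∑' i, q i := fun t =>
    calc c * (∑ i ∈ t, v i) ^ p ≤ c * ∑ i ∈ t, v i ^ p := by
          gcongr
          exact Finset.le_sum_of_subadditive_on_pred (fun x : ℝ => x ^ p) (fun x => 0 ≤ x)
            (Real.zero_rpow hp0.ne').le
            (fun x y hx hy => Real.rpow_add_le_add_rpow hx hy hp0.le hp1)
            (fun _ _ => add_nonneg) v fun i _ => hv i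
      _ ≤ ∑ i ∈ t, q i := by rw [Finset.mul_sum]; exact Finset.sum_le_sum fun i _ => hvq i
      _ ≤ ∑' i, q i := hq.sum_le_tsum t fun i _ =>
          (mul_nonneg hc (Real.rpow_nonneg (hv i) p)).trans (hvq i)
  exact le_of_tendsto'
    (((continuous_const.mul (Real.continuous_rpow_const hp0.le)).tendsto s).comp hs) hfin

section essSupSet

variable {E : Set ℝ}

lemma le_of_volume_inter_Ioi_eq_zero {c t : ℝ} (hc : c ∈ lowerBounds E) (h0 : volume E ≠ 0)
    (ht : volume (E ∩ Ioi t) = 0) : c ≤ t := by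
  by_contra! htc
  have hEt : E ⊆ Ioi t := fun x hx => htc.trans_le (hc hx)
  exact h0 (by rwa [inter_eq_left.2 hEt] at ht)

lemma essSupSet_nonneg (hE : 0 ∈ lowerBounds E) (h0 : volume E ≠ 0) : 0 ≤ essSupSet E :=
  Real.sInf_nonneg fun _ ht => le_of_volume_inter_Ioi_eq_zero hE h0 ht

lemma essSupSet_le (hE : BddBelow E) (h0 : volume E ≠ 0) {t : ℝ}
    (ht : volume (E ∩ Ioi t) = 0) : essSupSet E ≤ t :=
  csInf_le (hE.elim fun _ hc => ⟨_, fun _ hs => le_of_volume_inter_Ioi_eq_zero hc h0 hs⟩) ht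

lemma inter_Ioi_eq_empty {t : ℝ} (hEt : E ⊆ Iic t) : E ∩ Ioi t = ∅ :=
  eq_empty_of_forall_notMem fun _ hx => (mem_Iic.1 (hEt hx.1)).not_gt (mem_Ioi.1 hx.2)

lemma essSupSet_le_of_subset_Iic (hE : BddBelow E) (h0 : volume E ≠ 0) {t : ℝ}
    (hEt : E ⊆ Iic t) : essSupSet E ≤ t :=
  essSupSet_le hE h0 <| by rw [inter_Ioi_eq_empty hEt, measure_empty]

lemma volume_inter_Ioi_ne_zero (hE : BddBelow E) (h0 : volume E ≠ 0) {τ : ℝ}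
    (hτ : τ < essSupSet E) : volume (E ∩ Ioi τ) ≠ 0 :=
  fun ht => hτ.not_ge (essSupSet_le hE h0 ht)

lemma volume_inter_Ioi_essSupSet (hE : BddBelow E) (hE' : BddAbove E) (h0 : volume E ≠ 0) :
    volume (E ∩ Ioi (essSupSet E)) = 0 := by
  obtain ⟨c, hc⟩ := hE'
  have hne : {t | volume (E ∩ Ioi t) = 0}.Nonempty := ⟨c, by
    rw [mem_ofPred_eq, inter_Ioi_eq_empty hc, measure_empty]⟩
  obtain ⟨u, -, hu, hunull⟩ := exists_seq_tendsto_sInf hne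
    (hE.elim fun _ hc => ⟨_, fun _ hs => le_of_volume_inter_Ioi_eq_zero hc h0 hs⟩)
  refine measure_mono_null (fun x hx => ?_) (measure_iUnion_null hunull)
  obtain ⟨n, hn⟩ := (hu.eventually (gt_mem_nhds hx.2)).exists
  exact mem_iUnion.2 ⟨n, hx.1, hn⟩

end essSupSet

namespace IsCDDensity

variable {N D' : ℝ} {h : ℝ → ℝ}

lemma rpow_profile (hh : IsCDDensity N D' h) (hN : 1 < N) {x : ℝ} (hx : x ∈ Icc 0 D') :
    (h x ^ (1 / (N - 1))) ^ (N - 1) = h x := by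
  rw [← Real.rpow_mul (hh.1 x hx), one_div_mul_cancel (by linarith), Real.rpow_one]

lemma le_rpow_of_profile_le (hh : IsCDDensity N D' h) (hN : 1 < N) {x B : ℝ}
    (hx : x ∈ Icc 0 D') (hB : h x ^ (1 / (N - 1)) ≤ B) : h x ≤ B ^ (N - 1) := by
  rw [← hh.rpow_profile hN hx]
  exact Real.rpow_le_rpow (Real.rpow_nonneg (hh.1 x hx) _) hB (by linarith)

/-- The ray from `(0, 0)` lies below the concave profile `h ^ (1 / (N - 1))`. -/
lemma rpow_mul_le_of_le (hh : IsCDDensity N D' h) (hN : 1 < N) {x y : ℝ} (hx : 0 ≤ x)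
    (hxy : x ≤ y) (hy : y ≤ D') : x ^ (N - 1) * h y ≤ y ^ (N - 1) * h x := by
  rcases hxy.eq_or_lt with rfl | hxy'
  · rfl
  have hy0 : 0 < y := hx.trans_lt hxy'
  have hxI : x ∈ Icc 0 D' := ⟨hx, hxy.trans hy⟩
  have hyI : y ∈ Icc 0 D' := ⟨hy0.le, hy⟩
  have h0I : (0 : ℝ) ∈ Icc 0 D' := ⟨le_rfl, hy0.le.trans hy⟩
  have hprofile : x * h y ^ (1 / (N - 1)) ≤ y * h x ^ (1 / (N - 1)) := by
    have h1 : 0 ≤ 1 - x / y := by rw [sub_nonneg, div_le_one hy0]; exact hxy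
    have hconc := hh.2.2.2 h0I hyI h1 (div_nonneg hx hy0.le) (by ring)
    simp only [smul_eq_mul, mul_zero, zero_add, div_mul_cancel₀ x hy0.ne'] at hconc
    have := mul_nonneg h1 (Real.rpow_nonneg (hh.1 0 h0I) (1 / (N - 1)))
    rw [← div_le_iff₀' hy0, mul_div_right_comm]
    linarith
  have := Real.rpow_le_rpow (by have := Real.rpow_nonneg (hh.1 y hyI) (1 / (N - 1)); positivity)
    hprofile (by linarith : 0 ≤ N - 1)
  rwa [Real.mul_rpow hx (Real.rpow_nonneg (hh.1 y hyI) _),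
    Real.mul_rpow hy0.le (Real.rpow_nonneg (hh.1 x hxI) _), hh.rpow_profile hN hxI,
    hh.rpow_profile hN hyI] at this

lemma mul_rpow_le_of_le (hh : IsCDDensity N D' h) (hN : 1 < N) {c x y : ℝ} (hx : 0 ≤ x)
    (hxy : x ≤ y) (hy : y ≤ D') (hc : c * y ^ (N - 1) ≤ h y) : c * x ^ (N - 1) ≤ h x := by
  rcases hx.eq_or_lt with rfl | hx0
  · rw [Real.zero_rpow (by linarith), mul_zero]
    exact hh.1 0 ⟨le_rfl, hxy.trans hy⟩
  have hy0 : 0 < y ^ (N - 1) := Real.rpow_pos_of_pos (hx0.trans_le hxy) _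
  refine le_of_mul_le_mul_left ?_ hy0
  calc y ^ (N - 1) * (c * x ^ (N - 1)) = x ^ (N - 1) * (c * y ^ (N - 1)) := by ring
    _ ≤ x ^ (N - 1) * h y := mul_le_mul_of_nonneg_left hc (Real.rpow_nonneg hx _)
    _ ≤ y ^ (N - 1) * h x := hh.rpow_mul_le_of_le hN hx hxy hy

lemma comp_sub_left (hh : IsCDDensity N D' h) : IsCDDensity N D' (fun x => h (D' - x)) := by
  have hmem : ∀ x ∈ Icc 0 D', D' - x ∈ Icc 0 D' := fun x hx =>
    ⟨by linarith [hx.2], by linarith [hx.1]⟩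
  refine ⟨fun x hx => hh.1 _ (hmem x hx),
    fun x hx => hh.2.1 _ ⟨by linarith [hx.2], by linarith [hx.1]⟩,
    convex_Icc _ _, fun x hx y hy a b ha hb hab => ?_⟩
  have := hh.2.2.2 (hmem x hx) (hmem y hy) ha hb hab
  rwa [show a • (D' - x) + b • (D' - y) = D' - (a • x + b • y) by
    simp only [smul_eq_mul]; linear_combination D' * hab] at this

/-- The ray from `(D', 0)` lies below the concave profile `h ^ (1 / (N - 1))`. -/
lemma sub_rpow_mul_le_of_le (hh : IsCDDensity N D' h) (hN : 1 < N) {x y : ℝ} (hx : 0 ≤ x)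
    (hxy : x ≤ y) (hy : y ≤ D') : (D' - y) ^ (N - 1) * h x ≤ (D' - x) ^ (N - 1) * h y := by
  simpa using hh.comp_sub_left.rpow_mul_le_of_le hN (x := D' - y) (y := D' - x)
    (by linarith) (by linarith) (by linarith)

lemma integral_le_of_slope_le (hh : IsCDDensity N D' h) (hN : 1 < N) {α γ z S : ℝ}
    (hint : IntervalIntegrable h volume α γ) (hα : 0 ≤ α) (hαγ : α < γ) (hS : 0 < S)
    (hz : z ∈ Ioo γ D') (hzS : S * (z - γ) ≤ h z ^ (1 / (N - 1)) - h γ ^ (1 / (N - 1))) :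
    ∫ x in α..γ, h x ≤ (h γ ^ (1 / (N - 1))) ^ N / (N * S) := by
  set G := h γ ^ (1 / (N - 1))
  set k := γ - G / S
  have hγD : γ ≤ D' := hz.1.le.trans hz.2.le
  have hline : S * (γ - k) = G := by simp only [k]; field_simp; ring
  have hbelow : ∀ x ∈ Ioo α γ, h x ^ (1 / (N - 1)) ≤ S * (x - k) := by
    intro x hx
    have hslope : (h z ^ (1 / (N - 1)) - G) / (z - γ) ≤ (G - h x ^ (1 / (N - 1))) / (γ - x) :=
      hh.2.2.slope_anti_adjacent ⟨hα.trans hx.1.le, hx.2.le.trans hγD⟩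
        ⟨(hα.trans hαγ.le).trans hz.1.le, hz.2.le⟩ hx.2 hz.1
    rw [div_le_div_iff₀ (by linarith [hz.1]) (by linarith [hx.2])] at hslope
    have : S * (γ - x) * (z - γ) ≤ (G - h x ^ (1 / (N - 1))) * (z - γ) := by
      nlinarith [hz.1, hx.2]
    have := le_of_mul_le_mul_right this (by linarith [hz.1])
    linarith
  have hkα : k ≤ α := by
    by_contra! hk
    have hx : (α + min k γ) / 2 ∈ Ioo α γ := ⟨by linarith [lt_min hk hαγ], by
      linarith [min_le_right k γ, lt_min hk hαγ]⟩
    have := (Real.rpow_nonneg (hh.1 _ ⟨hα.trans hx.1.le, hx.2.le.trans hγD⟩) _).trans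
      (hbelow _ hx)
    nlinarith [min_le_left k γ, lt_min hk hαγ]
  rw [← hline]
  exact integral_le_of_le_linear_rpow hN hS hkα hαγ.le hint fun x hx =>
    hh.le_rpow_of_profile_le hN ⟨hα.trans hx.1.le, hx.2.le.trans hγD⟩ (hbelow x hx)

lemma integral_le_of_forall_slope_le (hh : IsCDDensity N D' h) (hN : 1 < N) {γ S : ℝ}
    (hint : IntervalIntegrable h volume γ D') (hγ : 0 ≤ γ) (hγD : γ ≤ D') (hS : 0 < S)
    (hslope : ∀ z ∈ Ioo γ D', h z ^ (1 / (N - 1)) - h γ ^ (1 / (N - 1)) ≤ S * (z - γ)) :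
    ∫ x in γ..D', h x ≤ (h γ ^ (1 / (N - 1)) + S * (D' - γ)) ^ N / (N * S) := by
  set G := h γ ^ (1 / (N - 1))
  have hline : ∀ q, S * (q - (γ - G / S)) = G + S * (q - γ) := fun q => by field_simp; ring
  rw [← hline]
  refine integral_le_of_le_linear_rpow hN hS
    (sub_le_self _ (div_nonneg (Real.rpow_nonneg (hh.1 γ ⟨hγ, hγD⟩) _) hS.le)) hγD hint
    fun z hz => hh.le_rpow_of_profile_le hN ⟨hγ.trans hz.1.le, hz.2.le⟩ ?_
  rw [hline]
  linarith [hslope z hz]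

/-- Lévy–Gromov-type estimate at the right endpoint `γ` of `(α, γ)`. The profile either has
a chord of slope at least `S = Y ^ N / N` to the right of `γ`, and then concavity puts it below
the line of slope `S` through `γ` on `(α, γ)`, bounding the mass of `(α, γ)`; or it stays below
that line on `(γ, D')`, bounding the mass to the right of `γ`. -/
lemma mul_rpow_le_profile (hh : IsCDDensity N D' h) (hN : 1 < N)
    (hint : IntervalIntegrable h volume 0 D') {α γ Y : ℝ} (hα : 0 ≤ α) (hαγ : α < γ)
    (hγ : γ ≤ D') (hY : 0 < Y)
    (hR : ((∫ x in α..γ, h x) ^ (1 / N) + Y ^ (N - 1) * D' / N) ^ N < ∫ x in γ..D', h x) :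
    Y * (∫ x in α..γ, h x) ^ (1 / N) ≤ h γ ^ (1 / (N - 1)) := by
  set v := ∫ x in α..γ, h x
  set G := h γ ^ (1 / (N - 1))
  have hN0 : 0 < N := by linarith
  have hγ0 : 0 ≤ γ := hα.trans hαγ.le
  have hv0 : 0 ≤ v := intervalIntegral.integral_nonneg hαγ.le fun x hx =>
    hh.1 x ⟨hα.trans hx.1, hx.2.trans hγ⟩
  have hG0 : 0 ≤ G := Real.rpow_nonneg (hh.1 γ ⟨hγ0, hγ⟩) _
  have hc : 0 ≤ Y ^ (N - 1) * D' / N :=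
    div_nonneg (mul_nonneg (Real.rpow_nonneg hY.le _) (hγ0.trans hγ)) hN0.le
  have hsub : ∀ {a b}, 0 ≤ a → a ≤ b → b ≤ D' → IntervalIntegrable h volume a b :=
    fun ha hab hb => hint.mono_set (uIcc_subset_uIcc (Icc_subset_uIcc ⟨ha, hab.trans hb⟩)
      (Icc_subset_uIcc ⟨ha.trans hab, hb⟩))
  by_contra! hG
  have hGY : G / Y < v ^ (1 / N) := (div_lt_iff₀' hY).2 hG
  set S := Y ^ N / N
  have hS : 0 < S := div_pos (Real.rpow_pos_of_pos hY N) hN0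
  have hpow : ∀ {q}, 0 ≤ q → q ^ N / (N * S) = (q / Y) ^ N := fun hq => by
    rw [mul_div_cancel₀ _ hN0.ne', Real.div_rpow hq hY.le]
  by_cases hsteep : ∃ z ∈ Ioo γ D', S * (z - γ) ≤ h z ^ (1 / (N - 1)) - G
  · obtain ⟨z, hz, hzS⟩ := hsteep
    have hv := hh.integral_le_of_slope_le hN (hsub hα hαγ.le hγ) hα hαγ hS hz hzS
    rw [hpow hG0] at hv
    have := Real.rpow_le_rpow hv0 hv (by positivity : 0 ≤ 1 / N)
    rw [← Real.rpow_mul (by positivity), mul_one_div_cancel hN0.ne', Real.rpow_one] at this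
    exact hGY.not_ge this
  · push Not at hsteep
    have hγD : γ < D' := by
      refine hγ.lt_of_ne fun hγD => ?_
      simp only [hγD, intervalIntegral.integral_same] at hR
      exact hR.not_ge (Real.rpow_nonneg (add_nonneg (Real.rpow_nonneg hv0 _) hc) N)
    have hR' := hh.integral_le_of_forall_slope_le hN (hsub hγ0 hγD.le le_rfl) hγ0 hγ hS
      fun z hz => (hsteep z hz).le
    rw [hpow (by nlinarith)] at hR'
    have hSY : S * D' / Y = Y ^ (N - 1) * D' / N := by
      rw [Real.rpow_sub_one hY.ne']; simp only [S]; ring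
    refine hR.not_ge (hR'.trans ?_)
    calc ((G + S * (D' - γ)) / Y) ^ N ≤ (G / Y + Y ^ (N - 1) * D' / N) ^ N :=
          Real.rpow_le_rpow (by positivity) (by rw [add_div, ← hSY]; gcongr; linarith) hN0.le
      _ ≤ (v ^ (1 / N) + Y ^ (N - 1) * D' / N) ^ N :=
          Real.rpow_le_rpow (by positivity) (by linarith) hN0.le

lemma mul_rpow_le_of_mass_right (hh : IsCDDensity N D' h) (hN : 1 < N)
    (hint : IntervalIntegrable h volume 0 D') {α γ : ℝ} (hα : 0 ≤ α) (hαγ : α < γ)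
    (hγ : γ ≤ D') (hv : ∫ x in α..γ, h x ≤ (1 / 50) ^ N)
    (hR : 49 / 100 ≤ ∫ x in γ..D', h x) :
    9 / 20 * N * (∫ x in α..γ, h x) ^ (1 - 1 / N) / D' ≤ h γ := by
  set v := ∫ x in α..γ, h x
  have hN0 : 0 < N := by linarith
  have hD' : 0 < D' := by linarith
  have hv0 : 0 ≤ v := intervalIntegral.integral_nonneg hαγ.le fun x hx =>
    hh.1 x ⟨hα.trans hx.1, hx.2.trans hγ⟩
  set Y := (9 / 20 * N / D') ^ (1 / (N - 1))
  have hY : 0 < Y := Real.rpow_pos_of_pos (by positivity) _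
  have hYpow : Y ^ (N - 1) = 9 / 20 * N / D' := by
    rw [← Real.rpow_mul (by positivity), one_div_mul_cancel (by linarith), Real.rpow_one]
  have hvroot : v ^ (1 / N) ≤ 1 / 50 := by
    have := Real.rpow_le_rpow hv0 hv (by positivity : 0 ≤ 1 / N)
    rwa [← Real.rpow_mul (by norm_num), mul_one_div_cancel hN0.ne', Real.rpow_one] at this
  have hprofile := hh.mul_rpow_le_profile hN hint hα hαγ hγ hY <| by
    rw [hYpow, show 9 / 20 * N / D' * D' / N = 9 / 20 by field_simp]
    calc (v ^ (1 / N) + 9 / 20) ^ N ≤ (47 / 100 : ℝ) ^ N :=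
          Real.rpow_le_rpow (by positivity) (by linarith) hN0.le
      _ ≤ (47 / 100 : ℝ) ^ (1 : ℝ) := Real.rpow_le_rpow_of_exponent_ge (by norm_num)
          (by norm_num) hN.le
      _ < ∫ x in γ..D', h x := by norm_num; linarith
  have := Real.rpow_le_rpow (by positivity) hprofile (by linarith : 0 ≤ N - 1)
  rw [hh.rpow_profile hN ⟨hα.trans hαγ.le, hγ⟩, Real.mul_rpow hY.le (by positivity), hYpow,
    ← Real.rpow_mul hv0, one_div_mul_eq_div, ← one_sub_div hN0.ne'] at this
  linarith [show 9 / 20 * N * v ^ (1 - 1 / N) / D' = 9 / 20 * N / D' * v ^ (1 - 1 / N) by ring]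

end IsCDDensity

def intervalPerim (D' : ℝ) (h : ℝ → ℝ) (α γ : ℝ) : ℝ :=
  (if α < γ ∧ α ≠ 0 then h α else 0) + (if α < γ ∧ γ ≠ D' then h γ else 0)

lemma intervalPerim_nonneg {D' : ℝ} {h : ℝ → ℝ} (hnn : ∀ x ∈ Icc 0 D', 0 ≤ h x) {α γ : ℝ}
    (hα : 0 ≤ α) (hγ : γ ≤ D') : 0 ≤ intervalPerim D' h α γ := by
  unfold intervalPerim
  split_ifs with h₁ h₂ h₂ <;> first
    | positivity
    | linarith [hnn α ⟨hα, h₁.1.le.trans hγ⟩, hnn γ ⟨hα.trans h₂.1.le, hγ⟩]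
    | linarith [hnn α ⟨hα, h₁.1.le.trans hγ⟩]
    | linarith [hnn γ ⟨hα.trans h₂.1.le, hγ⟩]

namespace IsProbCDDensity

variable {N D' : ℝ} {h : ℝ → ℝ}

lemma integrableOn (hh : IsProbCDDensity N D' h) : IntegrableOn h (Icc 0 D') := by
  by_contra hint
  simpa [integral_undef hint] using hh.2

lemma nonneg_length (hh : IsProbCDDensity N D' h) : 0 ≤ D' := by
  by_contra hD'
  simpa [Icc_eq_empty hD'] using hh.2

lemma intervalIntegrable (hh : IsProbCDDensity N D' h) {a b : ℝ} (ha : a ∈ Icc 0 D')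
    (hb : b ∈ Icc 0 D') : IntervalIntegrable h volume a b :=
  (hh.integrableOn.mono_set (uIcc_subset_Icc ha hb)).intervalIntegrable

lemma intervalIntegral_eq_one (hh : IsProbCDDensity N D' h) : ∫ x in 0..D', h x = 1 := by
  rw [intervalIntegral.integral_of_le hh.nonneg_length, ← integral_Icc_eq_integral_Ioc, hh.2]

lemma comp_sub_left_intervalIntegrable (hh : IsProbCDDensity N D' h) :
    IntervalIntegrable (fun x => h (D' - x)) volume 0 D' := by
  simpa using ((hh.intervalIntegrable ⟨le_rfl, hh.nonneg_length⟩
    ⟨hh.nonneg_length, le_rfl⟩).comp_sub_left D').symm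

/-- The ray from `(D', 0)` bounds `h` on `[0, a]` by `(D' / (D' - a)) ^ (N - 1) * h a`. -/
lemma integral_zero_le (hh : IsProbCDDensity N D' h) (hN : 1 < N) {a : ℝ} (ha : 0 ≤ a)
    (haD : a < D') : ∫ x in 0..a, h x ≤ a * ((D' / (D' - a)) ^ (N - 1) * h a) := by
  have hDa : 0 < D' - a := by linarith
  have hbound : ∀ u ∈ Icc 0 a, h u ≤ (D' / (D' - a)) ^ (N - 1) * h a := by
    intro u hu
    have hray := hh.1.sub_rpow_mul_le_of_le hN hu.1 hu.2 haD.le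
    have hmono : (D' - u) ^ (N - 1) ≤ D' ^ (N - 1) :=
      Real.rpow_le_rpow (by linarith [hu.2]) (by linarith [hu.1]) (by linarith)
    have hha : 0 ≤ h a := hh.1.1 a ⟨ha, haD.le⟩
    rw [Real.div_rpow (by linarith) hDa.le, div_mul_eq_mul_div, le_div_iff₀' (by positivity)]
    nlinarith
  calc ∫ x in 0..a, h x ≤ ∫ _ in 0..a, (D' / (D' - a)) ^ (N - 1) * h a :=
        intervalIntegral.integral_mono_on ha (hh.intervalIntegrable ⟨le_rfl, hh.nonneg_length⟩
          ⟨ha, haD.le⟩) intervalIntegrable_const hbound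
    _ = a * ((D' / (D' - a)) ^ (N - 1) * h a) := by simp; ring

/-- The model density `N y ^ (N - 1) / D ^ N` has mass at most `1` on `[b, D']`, whereas `h` has
mass more than `1 - ε` there. -/
lemma exists_mul_rpow_le (hh : IsProbCDDensity N D' h) (hN : 1 < N) {D b ε : ℝ} (hD : D' ≤ D)
    (hb0 : 0 ≤ b) (hbD : b ≤ D') (hmass : ∫ x in 0..b, h x < ε) :
    ∃ y ∈ Icc b D', (1 - ε) * (N / D ^ N) * y ^ (N - 1) ≤ h y := by
  by_contra! H
  have hDN : 0 ≤ N / D ^ N := div_nonneg (by linarith) (Real.rpow_nonneg (by linarith) _)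
  have hε : 0 ≤ 1 - ε := by
    by_contra! hε
    have := H b ⟨le_rfl, hbD⟩
    nlinarith [hh.1.1 b ⟨hb0, hbD⟩, mul_nonneg hDN (Real.rpow_nonneg hb0 (N - 1))]
  have hmodel : ∫ y in b..D', (1 - ε) * (N / D ^ N) * y ^ (N - 1) ≤ 1 - ε := by
    rw [intervalIntegral.integral_const_mul, integral_rpow (Or.inl (by linarith)),
      sub_add_cancel, mul_assoc,
      show N / D ^ N * ((D' ^ N - b ^ N) / N) = (D' ^ N - b ^ N) / D ^ N by field_simp]
    refine mul_le_of_le_one_right hε (div_le_one_of_le₀ ?_ (Real.rpow_nonneg (by linarith) _))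
    linarith [Real.rpow_le_rpow (hb0.trans hbD) hD (by linarith : 0 ≤ N), Real.rpow_nonneg hb0 N]
  have hupper : ∫ y in b..D', h y ≤ ∫ y in b..D', (1 - ε) * (N / D ^ N) * y ^ (N - 1) :=
    intervalIntegral.integral_mono_on hbD
      (hh.intervalIntegrable ⟨hb0, hbD⟩ ⟨hb0.trans hbD, le_rfl⟩)
      ((continuous_const.mul (Real.continuous_rpow_const (by linarith))).intervalIntegrable _ _)
      fun y hy => (H y hy).le
  have hsplit := intervalIntegral.integral_add_adjacent_intervals
    (hh.intervalIntegrable ⟨le_rfl, hb0.trans hbD⟩ ⟨hb0, hbD⟩)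
    (hh.intervalIntegrable ⟨hb0, hbD⟩ ⟨hb0.trans hbD, le_rfl⟩)
  rw [hh.intervalIntegral_eq_one] at hsplit
  linarith

/-- One of `(0, α)` and `(γ, D')` carries mass at least `49 / 100`; the estimate at the
corresponding endpoint (after reflecting `[0, D']` if it is `α`) gives the bound. -/
lemma isoperimetric_interval (hh : IsProbCDDensity N D' h) (hN : 1 < N) {α γ : ℝ} (hα : 0 ≤ α)
    (hαγ : α < γ) (hγ : γ ≤ D') (hv : ∫ x in α..γ, h x ≤ (1 / 50) ^ N) :
    9 / 20 * N * (∫ x in α..γ, h x) ^ (1 - 1 / N) / D' ≤ intervalPerim D' h α γ := by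
  have hD' := hh.nonneg_length
  have hsplit : (∫ x in 0..α, h x) + (∫ x in α..γ, h x) + ∫ x in γ..D', h x = 1 := by
    rw [intervalIntegral.integral_add_adjacent_intervals
        (hh.intervalIntegrable ⟨le_rfl, hD'⟩ ⟨hα, hαγ.le.trans hγ⟩)
        (hh.intervalIntegrable ⟨hα, hαγ.le.trans hγ⟩ ⟨hα.trans hαγ.le, hγ⟩),
      intervalIntegral.integral_add_adjacent_intervals
        (hh.intervalIntegrable ⟨le_rfl, hD'⟩ ⟨hα.trans hαγ.le, hγ⟩)
        (hh.intervalIntegrable ⟨hα.trans hαγ.le, hγ⟩ ⟨hD', le_rfl⟩),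
      hh.intervalIntegral_eq_one]
  have hv' : ∫ x in α..γ, h x ≤ 1 / 50 := hv.trans <| by
    simpa using Real.rpow_le_rpow_of_exponent_ge (by norm_num : (0 : ℝ) < 1 / 50) (by norm_num)
      hN.le
  have hα0 : 0 ≤ if α < γ ∧ α ≠ 0 then h α else 0 := by
    split_ifs <;> first | exact hh.1.1 α ⟨hα, hαγ.le.trans hγ⟩ | rfl
  have hγ0 : 0 ≤ if α < γ ∧ γ ≠ D' then h γ else 0 := by
    split_ifs <;> first | exact hh.1.1 γ ⟨hα.trans hαγ.le, hγ⟩ | rfl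
  rcases le_or_gt (49 / 100) (∫ x in γ..D', h x) with hR | hR
  · have hγD : γ ≠ D' := by rintro rfl; simp at hR; linarith
    have := hh.1.mul_rpow_le_of_mass_right hN (hh.intervalIntegrable ⟨le_rfl, hD'⟩
      ⟨hD', le_rfl⟩) hα hαγ hγ hv hR
    rw [intervalPerim, if_pos (show α < γ ∧ γ ≠ D' from ⟨hαγ, hγD⟩)]
    linarith
  · have hL : 49 / 100 ≤ ∫ x in 0..α, h x := by linarith
    have hα0' : α ≠ 0 := by rintro rfl; simp at hL; linarith
    have hrefl : ∀ a b, ∫ x in D' - b..D' - a, h (D' - x) = ∫ x in a..b, h x := fun a b => by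
      simp [intervalIntegral.integral_comp_sub_left]
    have := hh.1.comp_sub_left.mul_rpow_le_of_mass_right hN
      hh.comp_sub_left_intervalIntegrable (α := D' - γ) (γ := D' - α) (by linarith)
      (by linarith) (by linarith) (by rwa [hrefl]) (by simpa [hrefl] using hL)
    rw [hrefl, sub_sub_cancel] at this
    rw [intervalPerim, if_pos (show α < γ ∧ α ≠ 0 from ⟨hαγ, hα0'⟩)]
    linarith

end IsProbCDDensity

namespace IntervalDecomp

variable {N D' : ℝ} {h : ℝ → ℝ} {E : Set ℝ} (d : IntervalDecomp D' h E)

lemma pairwise_disjoint : Pairwise (Function.onFun Disjoint fun i => Ioo (d.a i) (d.b i)) :=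
    fun i j hij => by
  rcases d.sep i j hij with hc | hc
  · exact (Ioc_disjoint_Ioc_of_le hc).mono Ioo_subset_Ioc_self Ioo_subset_Ioc_self
  · exact ((Ioc_disjoint_Ioc_of_le hc).mono Ioo_subset_Ioc_self Ioo_subset_Ioc_self).symm

lemma iUnion_subset_Icc : ⋃ i, Ioo (d.a i) (d.b i) ⊆ Icc 0 D' :=
  iUnion_subset fun i _ hx => ⟨(d.nonneg i).trans hx.1.le, hx.2.le.trans (d.le_top i)⟩

lemma hasSum_integral (hint : IntegrableOn h (Icc 0 D')) :
    HasSum (fun i => ∫ x in d.a i..d.b i, h x) (∫ x in E, h x) := by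
  simp only [intervalIntegral.integral_of_le (d.le _), integral_Ioc_eq_integral_Ioo]
  rw [setIntegral_congr_set d.aeEq]
  exact hasSum_integral_iUnion (fun _ => measurableSet_Ioo) d.pairwise_disjoint
    (hint.mono_set d.iUnion_subset_Icc)

lemma intervalIntegral_le (hnn : ∀ x ∈ Icc 0 D', 0 ≤ h x) (hint : IntegrableOn h (Icc 0 D'))
    (i : ℕ) : ∫ x in d.a i..d.b i, h x ≤ ∫ x in E, h x :=
  le_hasSum (d.hasSum_integral hint) i fun j _ => intervalIntegral.integral_nonneg (d.le j)
    fun x hx => hnn x ⟨(d.nonneg j).trans hx.1, hx.2.trans (d.le_top j)⟩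

lemma apply_left_le_perim (hnn : ∀ x ∈ Icc 0 D', 0 ≤ h x) {i : ℕ} (hab : d.a i < d.b i)
    (ha : d.a i ≠ 0) : h (d.a i) ≤ d.perim := by
  have hle : intervalPerim D' h (d.a i) (d.b i) ≤ d.perim :=
    d.summablePerim.le_tsum i fun j _ => intervalPerim_nonneg hnn (d.nonneg j) (d.le_top j)
  rw [intervalPerim, if_pos (show d.a i < d.b i ∧ d.a i ≠ 0 from ⟨hab, ha⟩)] at hle
  have : 0 ≤ if d.a i < d.b i ∧ d.b i ≠ D' then h (d.b i) else 0 := by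
    split_ifs <;> first | exact hnn _ ⟨(d.nonneg i).trans hab.le, d.le_top i⟩ | rfl
  linarith

lemma perim_nonneg (hnn : ∀ x ∈ Icc 0 D', 0 ≤ h x) : 0 ≤ d.perim :=
  tsum_nonneg fun i => intervalPerim_nonneg hnn (d.nonneg i) (d.le_top i)

lemma exists_lt_right {τ : ℝ} (hτ : volume (E ∩ Ioi τ) ≠ 0) : ∃ i, d.a i < d.b i ∧ τ < d.b i := by
  by_contra! H
  refine hτ ((measure_congr (ae_eq_set_inter d.aeEq (ae_eq_refl _))).trans ?_)
  rw [iUnion_inter, measure_iUnion_null_iff]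
  intro i
  rw [(disjoint_left.2 fun x hx hx' => (H i (hx.1.trans hx.2)).not_gt (hx'.trans hx.2)).inter_eq,
    measure_empty]

lemma right_le_essSupSet (hE : BddBelow E) (hE' : BddAbove E) (h0 : volume E ≠ 0) {i : ℕ}
    (hab : d.a i < d.b i) : d.b i ≤ essSupSet E := by
  by_contra! hb
  have hnull : volume ((⋃ j, Ioo (d.a j) (d.b j)) ∩ Ioi (essSupSet E)) = 0 :=
    (measure_congr (ae_eq_set_inter d.aeEq (ae_eq_refl _))).symm.trans
      (volume_inter_Ioi_essSupSet hE hE' h0)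
  have hsub : Ioo (max (d.a i) (essSupSet E)) (d.b i) ⊆
      (⋃ j, Ioo (d.a j) (d.b j)) ∩ Ioi (essSupSet E) := fun x hx =>
    ⟨mem_iUnion.2 ⟨i, (le_max_left _ _).trans_lt hx.1, hx.2⟩, (le_max_right _ _).trans_lt hx.1⟩
  have := measure_mono_null hsub hnull
  rw [Real.volume_Ioo, ENNReal.ofReal_eq_zero, sub_nonpos] at this
  exact this.not_gt (max_lt hab hb)

lemma intervalIntegral_zero_left_le (hh : IsProbCDDensity N D' h) (hN : 1 < N) {i : ℕ} {b : ℝ}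
    (hab : d.a i < d.b i) (hbi : d.b i ≤ b) (hb : b < D') :
    ∫ x in 0..d.a i, h x ≤ b * ((D' / (D' - b)) ^ (N - 1) * d.perim) := by
  have ha0 := d.nonneg i
  have hb0 : 0 ≤ b := ha0.trans (hab.le.trans hbi)
  have hD' : 0 ≤ D' := hb0.trans hb.le
  have hratio : 0 ≤ (D' / (D' - b)) ^ (N - 1) := Real.rpow_nonneg (div_nonneg hD' (by linarith)) _
  rcases ha0.eq_or_lt with ha | ha
  · rw [← ha, intervalIntegral.integral_same]
    exact mul_nonneg hb0 (mul_nonneg hratio (d.perim_nonneg hh.1.1))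
  have haI : d.a i ∈ Icc 0 D' := ⟨ha0, by linarith⟩
  refine (hh.integral_zero_le hN ha0 (by linarith)).trans (mul_le_mul (by linarith) ?_
    (mul_nonneg (Real.rpow_nonneg (div_nonneg hD' (by linarith)) _) (hh.1.1 _ haI)) hb0)
  refine mul_le_mul ?_ (d.apply_left_le_perim hh.1.1 hab ha.ne') (hh.1.1 _ haI) hratio
  exact Real.rpow_le_rpow (div_nonneg hD' (by linarith))
    (div_le_div_of_nonneg_left hD' (by linarith) (by linarith)) (by linarith)

/-- The interval of `E` is chosen so close to `b(E)` that, by continuity of the primitive of `h`,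
the gap between it and `b(E)` has arbitrarily small mass. -/
lemma intervalIntegral_essSupSet_le (hh : IsProbCDDensity N D' h) (hN : 1 < N)
    (hE : BddBelow E) (hE' : BddAbove E) (h0 : volume E ≠ 0) (hb : essSupSet E < D') :
    ∫ x in 0..essSupSet E, h x ≤
      essSupSet E * ((D' / (D' - essSupSet E)) ^ (N - 1) * d.perim) + ∫ x in E, h x := by
  set b := essSupSet E
  obtain ⟨i₀, hab₀, -⟩ := d.exists_lt_right (volume_inter_Ioi_ne_zero hE h0 (sub_one_lt b))
  have hb0 : 0 < b :=
    (d.nonneg i₀).trans_lt (hab₀.trans_le (d.right_le_essSupSet hE hE' h0 hab₀))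
  refine le_of_forall_pos_le_add fun η hη => ?_
  have hgap : ∀ᶠ β in 𝓝[≤] b, ∫ x in β..b, h x < η := by
    rw [← nhdsWithin_Icc_eq_nhdsLE hb0]
    have hcont := intervalIntegral.continuousOn_primitive_interval_left (a := 0) (b := b)
      (hh.integrableOn.mono_set (by simpa [uIcc_of_le hb0.le] using Icc_subset_Icc_right hb.le))
    rw [uIcc_of_le hb0.le] at hcont
    simpa using (hcont b (right_mem_Icc.2 hb0.le)).eventually (gt_mem_nhds (by simpa using hη))
  obtain ⟨l, hl, hlb⟩ := mem_nhdsLE_iff_exists_Ioc_subset.1 hgap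
  obtain ⟨i, hab, hli⟩ := d.exists_lt_right (volume_inter_Ioi_ne_zero hE h0 hl)
  have hbi := d.right_le_essSupSet hE hE' h0 hab
  have haI : d.a i ∈ Icc 0 D' := ⟨d.nonneg i, by linarith⟩
  have hbiI : d.b i ∈ Icc 0 D' := ⟨(d.nonneg i).trans hab.le, by linarith⟩
  have hbI : b ∈ Icc 0 D' := ⟨hb0.le, hb.le⟩
  rw [← intervalIntegral.integral_add_adjacent_intervals
      (hh.intervalIntegrable ⟨le_rfl, hb0.le.trans hb.le⟩ haI) (hh.intervalIntegrable haI hbI),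
    ← intervalIntegral.integral_add_adjacent_intervals (hh.intervalIntegrable haI hbiI)
      (hh.intervalIntegrable hbiI hbI)]
  have hgap_i : ∫ x in d.b i..b, h x < η := hlb ⟨hli, hbi⟩
  linarith [d.intervalIntegral_le hh.1.1 hh.integrableOn i,
    d.intervalIntegral_zero_left_le hh hN hab hbi hb]

end IntervalDecomp

/-- The size of `m_h(E)` needed for accuracy `ε`: the first term makes the isoperimetric
inequality available, the other two make the mass below `b(E)` smaller than `ε`. -/
def massThreshold (N ε : ℝ) : ℝ :=
  min ((1 / 50) ^ N) (min (ε / 2) ((ε / (N * 6 ^ (N - 1))) ^ (N / (N - 1))))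

lemma massThreshold_pos {N ε : ℝ} (hN : 1 < N) (hε : 0 < ε) : 0 < massThreshold N ε := by
  have : 0 < ε / (N * 6 ^ (N - 1)) :=
    div_pos hε (mul_pos (by linarith) (Real.rpow_pos_of_pos (by norm_num) _))
  exact lt_min (by positivity) (lt_min (by positivity) (Real.rpow_pos_of_pos this _))

lemma rpow_le_of_le_massThreshold {N ε w : ℝ} (hN : 1 < N) (hε : 0 < ε) (hw0 : 0 ≤ w)
    (hw : w ≤ massThreshold N ε) : w ^ (1 - 1 / N) ≤ ε / (N * 6 ^ (N - 1)) := by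
  have hN0 : N ≠ 0 := by linarith
  have hN1 : N - 1 ≠ 0 := by linarith
  have := Real.rpow_le_rpow hw0 (hw.trans ((min_le_right _ _).trans (min_le_right _ _)))
    (by rw [sub_nonneg, div_le_one (by linarith)]; exact hN.le : 0 ≤ 1 - 1 / N)
  rwa [← Real.rpow_mul (div_nonneg hε.le (mul_nonneg (by linarith)
    (Real.rpow_nonneg (by norm_num) _))), show N / (N - 1) * (1 - 1 / N) = 1 by field_simp,
    Real.rpow_one] at this

namespace IsProbCDDensity

variable {N D' : ℝ} {h : ℝ → ℝ} {E : Set ℝ}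

lemma isoperimetric (hh : IsProbCDDensity N D' h) (hN : 1 < N) (d : IntervalDecomp D' h E)
    (hw : ∫ x in E, h x ≤ (1 / 50) ^ N) :
    9 / 20 * N * (∫ x in E, h x) ^ (1 - 1 / N) / D' ≤ d.perim := by
  have hN0 : 0 < N := by linarith
  have hp0 : 0 < 1 - 1 / N := by rw [sub_pos, div_lt_one hN0]; exact hN
  rw [mul_div_right_comm]
  refine mul_rpow_le_tsum_of_hasSum hp0 (by simp [hN0.le]) (by positivity [hh.nonneg_length])
    (fun i => intervalIntegral.integral_nonneg (d.le i) fun x hx =>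
      hh.1.1 x ⟨(d.nonneg i).trans hx.1, hx.2.trans (d.le_top i)⟩)
    (d.hasSum_integral hh.integrableOn) d.summablePerim fun i => ?_
  rcases (d.le i).lt_or_eq with hab | hab
  · rw [← mul_div_right_comm]
    exact hh.isoperimetric_interval hN (d.nonneg i) hab (d.le_top i)
      ((d.intervalIntegral_le hh.1.1 hh.integrableOn i).trans hw)
  · simp only [hab, intervalIntegral.integral_same, Real.zero_rpow hp0.ne', mul_zero]
    exact intervalPerim_nonneg hh.1.1 ((d.nonneg i).trans (d.le i)) (d.le_top i)

lemma nine_mul_le_of_residual (hh : IsProbCDDensity N D' h) (hN : 1 < N)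
    (d : IntervalDecomp D' h E) {D : ℝ} (hD : 0 ≤ D) (hD' : 0 < D')
    (hw0 : 0 < ∫ x in E, h x) (hw : ∫ x in E, h x ≤ (1 / 50) ^ N)
    (hres : D * d.perim ≤ 11 / 10 * (N * (∫ x in E, h x) ^ (1 - 1 / N))) : 9 * D ≤ 22 * D' := by
  have hc : 0 < N * (∫ x in E, h x) ^ (1 - 1 / N) :=
    mul_pos (by linarith) (Real.rpow_pos_of_pos hw0 _)
  have hiso := hh.isoperimetric hN d hw
  rw [div_le_iff₀ hD'] at hiso
  have := mul_le_mul_of_nonneg_left hiso hD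
  nlinarith

lemma exists_mul_rpow_le_above_essSupSet (hh : IsProbCDDensity N D' h) (hN : 1 < N) {ε : ℝ}
    (hε : 0 < ε) (d : IntervalDecomp D' h E) {L D : ℝ} (hE : E ⊆ Icc 0 L) (hLD : 3 * L ≤ D)
    (hD'D : D' ≤ D) (hlong : 9 * D ≤ 22 * D') (hw0 : 0 < ∫ x in E, h x)
    (hw : ∫ x in E, h x ≤ massThreshold N ε)
    (hres : D * d.perim ≤ 11 / 10 * (N * (∫ x in E, h x) ^ (1 - 1 / N))) :
    ∃ y ∈ Icc (essSupSet E) D', (1 - ε) * (N / D ^ N) * y ^ (N - 1) ≤ h y := by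
  set b := essSupSet E
  set w := ∫ x in E, h x
  have hvol : volume E ≠ 0 := fun h0 => hw0.ne' <| by
    simp only [w, Measure.restrict_eq_zero.2 h0, integral_zero_measure]
  have hb0 : 0 ≤ b := essSupSet_nonneg (fun x hx => (hE hx).1) hvol
  have hbL : b ≤ L := essSupSet_le_of_subset_Iic (bddBelow_Icc.mono hE) hvol fun x hx => (hE hx).2
  refine hh.exists_mul_rpow_le hN hD'D hb0 (by linarith) ?_
  rcases hb0.eq_or_lt with hb | hb
  · rwa [← hb, intervalIntegral.integral_same]
  have hbD : b < D' := by linarith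
  have hP := d.perim_nonneg hh.1.1
  have hratio : (D' / (D' - b)) ^ (N - 1) ≤ 6 ^ (N - 1) :=
    Real.rpow_le_rpow (div_nonneg (by linarith) (by linarith))
      ((div_le_iff₀ (by linarith)).2 (by linarith)) (by linarith)
  have hbP : b * d.perim ≤ 11 / 30 * (N * w ^ (1 - 1 / N)) := by nlinarith
  have hwκ := rpow_le_of_le_massThreshold hN hε hw0.le hw
  have hw2 : w ≤ ε / 2 := hw.trans ((min_le_right _ _).trans (min_le_left _ _))
  calc ∫ x in 0..b, h x ≤ b * ((D' / (D' - b)) ^ (N - 1) * d.perim) + w :=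
        d.intervalIntegral_essSupSet_le hh hN (bddBelow_Icc.mono hE) (bddAbove_Icc.mono hE) hvol hbD
    _ ≤ 6 ^ (N - 1) * (11 / 30 * (N * (ε / (N * 6 ^ (N - 1))))) + ε / 2 := by
        rw [mul_left_comm]
        refine add_le_add
          (mul_le_mul hratio (hbP.trans ?_) (mul_nonneg hb.le hP) (by positivity)) hw2
        exact mul_le_mul_of_nonneg_left (mul_le_mul_of_nonneg_left hwκ (by linarith)) (by norm_num)
    _ = 11 / 30 * ε + ε / 2 := by
        field_simp
    _ < ε := by linarith

end IsProbCDDensity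

theorem density_lower_bound_general (N L : ℝ) (hN : 1 < N) :
    ∀ ε : ℝ, 0 < ε → ∃ wbar : ℝ, 0 < wbar ∧ ∃ δbar : ℝ, 0 < δbar ∧
      ∀ D D' : ℝ, 3 * L ≤ D → D' ∈ Set.Ioc (0:ℝ) D →
      ∀ h : ℝ → ℝ, IsProbCDDensity N D' h →
      ∀ E : Set ℝ, E ⊆ Set.Icc 0 L →
      ∀ d : IntervalDecomp D' h E,
        0 < (∫ x in E, h x) → (∫ x in E, h x) ≤ wbar →
        D * d.perim / (N * (∫ x in E, h x) ^ (1 - 1 / N)) - 1 ≤ δbar →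
        ∀ x ∈ Set.Icc (0:ℝ) (essSupSet E),
          (N / D ^ N) * x ^ (N - 1) * (1 - ε) ≤ h x := by
  intro ε hε
  refine ⟨massThreshold N ε, massThreshold_pos hN hε, 1 / 10, by norm_num, ?_⟩
  intro D D' hDL hD' h hh E hE d hw0 hw hres x hx
  have hres' : D * d.perim ≤ 11 / 10 * (N * (∫ x in E, h x) ^ (1 - 1 / N)) :=
    (div_le_iff₀ (mul_pos (by linarith) (Real.rpow_pos_of_pos hw0 _))).1 (by linarith)
  have hlong := hh.nine_mul_le_of_residual hN d (hD'.1.le.trans hD'.2) hD'.1 hw0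
    (hw.trans (min_le_left _ _)) hres'
  obtain ⟨y, hy, hhy⟩ :=
    hh.exists_mul_rpow_le_above_essSupSet hN hε d hE hDL hD'.2 hlong hw0 hw hres'
  calc N / D ^ N * x ^ (N - 1) * (1 - ε) = (1 - ε) * (N / D ^ N) * x ^ (N - 1) := by ring
    _ ≤ h x := hh.1.mul_rpow_le_of_le hN hx.1 (hx.2.trans hy.1) hy.2 hhy

/-- Proposition 5.7 (almost rigidity of the density, lower bound): for small `m_h(E)` and
small residual, `h(x) ≥ (N/D^N) x^{N-1} (1 - ε)` uniformly for `x ∈ [0, b(E)]`. -/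
theorem density_lower_bound (N L : ℝ) (hN : 1 < N) (hL : 0 < L) :
    ∀ ε : ℝ, 0 < ε → ∃ wbar : ℝ, 0 < wbar ∧ ∃ δbar : ℝ, 0 < δbar ∧
      ∀ D D' : ℝ, 3 * L ≤ D → D' ∈ Set.Ioc (0:ℝ) D →
      ∀ h : ℝ → ℝ, IsProbCDDensity N D' h →
      ∀ E : Set ℝ, E ⊆ Set.Icc 0 L →
      ∀ d : IntervalDecomp D' h E,
        0 < (∫ x in E, h x) → (∫ x in E, h x) ≤ wbar →
        D * d.perim / (N * (∫ x in E, h x) ^ (1 - 1 / N)) - 1 ≤ δbar →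
        ∀ x ∈ Set.Icc (0:ℝ) (essSupSet E),
          (N / D ^ N) * x ^ (N - 1) * (1 - ε) ≤ h x :=
  density_lower_bound_general N L hN
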